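/- arXiv:1008.1432 — 3 statements merged into one kernel-verified Lean document; each statement's English description precedes it below -/
import Mathlib

section
/- Assume ε ∈ {1,−1}, ξ ∉ {0, 1/6}, εξ(1−6ξ) > 0, and let λ* ∈ ℝ satisfy z(λ*)² = 1/(6εξ(1−6ξ)). Suppose (1−6ξ)(2ξλ*z(λ*) + 1 + w_m) ≠ 0 and 2ξ(1−3w_m)/((1−6ξ)(2ξλ*z(λ*) + 1 + w_m)) ≥ 0, and set y* = √(2ξ(1−3w_m)/((1−6ξ)(2ξλ*z(λ*) + 1 + w_m))). Then F(0, y*, λ*) = (0,0,0), i.e. the point 2b (slow-roll inflation) is an equilibrium of the system. -/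
open Polynomial Filter

/-- The factor `D(λ) = 1 − 6εξ(1−6ξ)z(λ)²` coming from the time reparametrization. -/
noncomputable def Dfun (ε ξ : ℝ) (z : ℝ → ℝ) (l : ℝ) : ℝ :=
  1 - 6*ε*ξ*(1-6*ξ)*(z l)^2

/-- The common bracket
`B(x,y,λ) = −4/3 − 2ξλy²z(λ) + ε(1−6ξ)(1−w_m)x² + 2εξ(1−3w_m)(x+z(λ))² + (1+w_m)(1−y²)`. -/
noncomputable def Bfun (ε ξ wm : ℝ) (z : ℝ → ℝ) (x y l : ℝ) : ℝ :=
  -4/3 - 2*ξ*l*y^2*(z l) + ε*(1-6*ξ)*(1-wm)*x^2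
    + 2*ε*ξ*(1-3*wm)*(x + z l)^2 + (1+wm)*(1-y^2)

/-- First component of the vector field:
`f₁ = −(x − (ε/2)λy²)·D(λ) + (3/2)(x + 6ξz(λ))·B(x,y,λ)`. -/
noncomputable def f1 (ε ξ wm : ℝ) (z : ℝ → ℝ) (x y l : ℝ) : ℝ :=
  -(x - ε/2*l*y^2) * Dfun ε ξ z l + 3/2*(x + 6*ξ*(z l)) * Bfun ε ξ wm z x y l

/-- Second component: `f₂ = y(2 − (1/2)λx)·D(λ) + (3/2)y·B(x,y,λ)`. -/
noncomputable def f2 (ε ξ wm : ℝ) (z : ℝ → ℝ) (x y l : ℝ) : ℝ :=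
  y*(2 - 1/2*l*x) * Dfun ε ξ z l + 3/2*y * Bfun ε ξ wm z x y l

/-- Third component: `f₃ = x·D(λ)/z′(λ)`. -/
noncomputable def f3 (ε ξ : ℝ) (z : ℝ → ℝ) (x y l : ℝ) : ℝ :=
  x * Dfun ε ξ z l / deriv z l

/-- The full vector field `F(x,y,λ) = (f₁,f₂,f₃)` of the reduced cosmological system. -/
noncomputable def Fvec (ε ξ wm : ℝ) (z : ℝ → ℝ) (x y l : ℝ) : ℝ × ℝ × ℝ :=
  (f1 ε ξ wm z x y l, f2 ε ξ wm z x y l, f3 ε ξ z x y l)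

/-- The effective equation-of-state parameter `w_eff(x,y,λ)`. -/
noncomputable def weff (ε ξ wm : ℝ) (z : ℝ → ℝ) (x y l : ℝ) : ℝ :=
  (Dfun ε ξ z l)⁻¹ *
    (-1 + ε*(1-6*ξ)*(1-wm)*x^2 + 2*ε*ξ*(1-3*wm)*(x + z l)^2
      + (1+wm)*(1-y^2) - 2*ε*ξ*(1-6*ξ)*(z l)^2 - 2*ξ*l*y^2*(z l))

/-- The Jacobian matrix `J_{ij} = ∂f_i/∂(j-th variable)` of `F` at the point `(x,y,λ)`. -/
noncomputable def Jmat (ε ξ wm : ℝ) (z : ℝ → ℝ) (x y l : ℝ) :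
    Matrix (Fin 3) (Fin 3) ℝ :=
  Matrix.of
    ![![deriv (fun t => f1 ε ξ wm z t y l) x,
        deriv (fun t => f1 ε ξ wm z x t l) y,
        deriv (fun t => f1 ε ξ wm z x y t) l],
      ![deriv (fun t => f2 ε ξ wm z t y l) x,
        deriv (fun t => f2 ε ξ wm z x t l) y,
        deriv (fun t => f2 ε ξ wm z x y t) l],
      ![deriv (fun t => f3 ε ξ z t y l) x,
        deriv (fun t => f3 ε ξ z x t l) y,
        deriv (fun t => f3 ε ξ z x y t) l]]

/-! At the point 2b the time-reparametrization factor `D` vanishes because of the choice of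
`λ*`, and the choice of `y*` makes the bracket `B` vanish as well; with `x = 0` every component
of `F` is a multiple of `D`, of `B`, or of `x`. -/

theorem Dfun_eq_zero_iff (ε ξ : ℝ) (z : ℝ → ℝ) (l : ℝ) :
    Dfun ε ξ z l = 0 ↔ 6*ε*ξ*(1-6*ξ)*(z l)^2 = 1 := by
  rw [Dfun, sub_eq_zero, eq_comm]

theorem Dfun_eq_zero_of_sq_eq {ε ξ : ℝ} {z : ℝ → ℝ} {l : ℝ} (hc : 6*ε*ξ*(1-6*ξ) ≠ 0)
    (hl : (z l)^2 = 1/(6*ε*ξ*(1-6*ξ))) : Dfun ε ξ z l = 0 := by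
  rw [Dfun_eq_zero_iff, hl, mul_one_div_cancel hc]

theorem Bfun_eq_zero_of_Dfun_eq_zero {ε ξ wm : ℝ} {z : ℝ → ℝ} {y l : ℝ}
    (hξ : 1-6*ξ ≠ 0) (hden : 2*ξ*l*(z l) + 1 + wm ≠ 0) (hD : Dfun ε ξ z l = 0)
    (hy : y^2 = 2*ξ*(1-3*wm)/((1-6*ξ)*(2*ξ*l*(z l) + 1 + wm))) :
    Bfun ε ξ wm z 0 y l = 0 := by
  rw [Dfun_eq_zero_iff] at hD
  have hz : 2*ε*ξ*(1-3*wm)*(z l)^2 * (3*(1-6*ξ)) = 1-3*wm := by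
    linear_combination (1-3*wm) * hD
  have hy' : y^2 * ((1-6*ξ)*(2*ξ*l*(z l) + 1 + wm)) = 2*ξ*(1-3*wm) := by
    rw [hy, div_mul_cancel₀ _ (mul_ne_zero hξ hden)]
  have hB : Bfun ε ξ wm z 0 y l * (3*(1-6*ξ)) = 0 := by
    rw [Bfun]
    linear_combination hz - 3 * hy'
  simpa [hξ] using hB

theorem Fvec_eq_zero_of_Dfun_eq_zero_of_Bfun_eq_zero {ε ξ wm : ℝ} {z : ℝ → ℝ} {y l : ℝ}
    (hD : Dfun ε ξ z l = 0) (hB : Bfun ε ξ wm z 0 y l = 0) :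
    Fvec ε ξ wm z 0 y l = (0, 0, 0) := by
  simp [Fvec, f1, f2, f3, hD, hB]

theorem slowRoll_point_is_equilibrium_general (ε ξ wm : ℝ) (z : ℝ → ℝ) (lstar : ℝ)
    (hsign : 0 < ε*ξ*(1-6*ξ))
    (hl : (z lstar)^2 = 1/(6*ε*ξ*(1-6*ξ)))
    (hden : (1-6*ξ)*(2*ξ*lstar*(z lstar) + 1 + wm) ≠ 0)
    (hpos : 0 ≤ 2*ξ*(1-3*wm)/((1-6*ξ)*(2*ξ*lstar*(z lstar) + 1 + wm))) :
    Fvec ε ξ wm z 0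
      (Real.sqrt (2*ξ*(1-3*wm)/((1-6*ξ)*(2*ξ*lstar*(z lstar) + 1 + wm)))) lstar
      = (0, 0, 0) := by
  have hD : Dfun ε ξ z lstar = 0 :=
    Dfun_eq_zero_of_sq_eq (by linarith) hl
  obtain ⟨hξ, hden'⟩ := mul_ne_zero_iff.mp hden
  exact Fvec_eq_zero_of_Dfun_eq_zero_of_Bfun_eq_zero hD
    (Bfun_eq_zero_of_Dfun_eq_zero hξ hden' hD (Real.sq_sqrt hpos))

/-- The point 2b (slow-roll inflation),
`x* = 0`, `y* = √(2ξ(1−3w_m)/((1−6ξ)(2ξλ*z(λ*)+1+w_m)))`, with `z(λ*)² = 1/(6εξ(1−6ξ))`,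
is an equilibrium of the system. -/
theorem slowRoll_point_is_equilibrium (ε ξ wm : ℝ) (z : ℝ → ℝ) (lstar : ℝ)
    (hε : ε = 1 ∨ ε = -1) (hξ0 : ξ ≠ 0) (hξ6 : ξ ≠ 1/6)
    (hsign : 0 < ε*ξ*(1-6*ξ))
    (hz : DifferentiableAt ℝ z lstar) (hz' : deriv z lstar ≠ 0)
    (hl : (z lstar)^2 = 1/(6*ε*ξ*(1-6*ξ)))
    (hden : (1-6*ξ)*(2*ξ*lstar*(z lstar) + 1 + wm) ≠ 0)
    (hpos : 0 ≤ 2*ξ*(1-3*wm)/((1-6*ξ)*(2*ξ*lstar*(z lstar) + 1 + wm))) :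
    Fvec ε ξ wm z 0
      (Real.sqrt (2*ξ*(1-3*wm)/((1-6*ξ)*(2*ξ*lstar*(z lstar) + 1 + wm)))) lstar
      = (0, 0, 0) :=
  slowRoll_point_is_equilibrium_general ε ξ wm z lstar hsign hl hden hpos
end

section
/- Assume ε ∈ {1,−1}, ξ ∉ {0, 1/6}, εξ(1−6ξ) > 0, z is twice differentiable at λ* with z′(λ*) ≠ 0, z(λ*)² = 1/(6εξ(1−6ξ)), 2ξλ*z(λ*) + 1 + w_m ≠ 0, 4ξ/(2ξλ*z(λ*) + 1 + w_m) > 0, and y* = √(4ξ/(2ξλ*z(λ*) + 1 + w_m)). Let J be the 3×3 Jacobian matrix of the vector field F at the point P₂ₐ = (−6ξ·z(λ*), y*, λ*). Then the characteristic polynomial of J equals X·(X − 12ξ)·(X + 12ξ) = X³ − 144ξ²X; in particular the eigenvalues of J are 0, 12ξ and −12ξ, so the fast-roll inflation point is non-hyperbolic. -/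
/-!
At `P₂ₐ` the factor `D` vanishes (this is what `z(λ*)² = 1/(6εξ(1−6ξ))` says) and so does `B`
(this is what fixes `y*`). Every Jacobian entry carrying a factor `D` or `B` therefore drops
out: the first row is `(0, 0, ∗)`, the third is `(0, 0, x·D′(λ*)/z′(λ*)) = (0, 0, 12ξ)`, and
`∂f₂/∂y = (3/2)·y·∂B/∂y = −12ξ`. A `3 × 3` matrix whose first two columns vanish outside the
middle row has characteristic polynomial `X·(X − J₂₂)·(X − J₃₃)`.
-/

open Polynomial Filter

section FastRollJacobian

variable (ε ξ wm : ℝ) (z : ℝ → ℝ)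

theorem hasDerivAt_Bfun_x (x y l : ℝ) :
    HasDerivAt (fun t => Bfun ε ξ wm z t y l)
      (2*ε*(1-6*ξ)*(1-wm)*x + 4*ε*ξ*(1-3*wm)*(x + z l)) x := by
  have h := (((((hasDerivAt_id' x).fun_pow 2).const_mul (ε*(1-6*ξ)*(1-wm))).fun_add
    ((((hasDerivAt_id' x).add_const (z l)).fun_pow 2).const_mul (2*ε*ξ*(1-3*wm)))).const_add
      (-4/3 - 2*ξ*l*y^2*(z l))).add_const ((1+wm)*(1-y^2))
  refine (h.congr_of_eventuallyEq (.of_forall fun t => ?_)).congr_deriv ?_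
  · rw [Bfun]; ring
  · ring

theorem hasDerivAt_Bfun_y (x y l : ℝ) :
    HasDerivAt (fun t => Bfun ε ξ wm z x t l) (-2*(2*ξ*l*(z l) + 1 + wm)*y) y := by
  have h := (((hasDerivAt_id' y).fun_pow 2).const_mul (-(2*ξ*l*(z l) + 1 + wm))).const_add
    (-4/3 + ε*(1-6*ξ)*(1-wm)*x^2 + 2*ε*ξ*(1-3*wm)*(x + z l)^2 + (1+wm))
  refine (h.congr_of_eventuallyEq (.of_forall fun t => ?_)).congr_deriv ?_
  · rw [Bfun]; ring
  · ring

theorem hasDerivAt_Dfun {l : ℝ} (hz : DifferentiableAt ℝ z l) :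
    HasDerivAt (Dfun ε ξ z) (-(12*ε*ξ*(1-6*ξ) * z l * deriv z l)) l := by
  refine (((hz.hasDerivAt.fun_pow 2).const_mul (6*ε*ξ*(1-6*ξ))).const_sub 1).congr_deriv ?_
  simp only [Nat.cast_ofNat]; ring

theorem hasDerivAt_f1_x (x y l : ℝ) :
    HasDerivAt (fun t => f1 ε ξ wm z t y l)
      (-Dfun ε ξ z l + 3/2*(Bfun ε ξ wm z x y l
        + (x + 6*ξ*z l) * (2*ε*(1-6*ξ)*(1-wm)*x + 4*ε*ξ*(1-3*wm)*(x + z l)))) x := by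
  have h := ((((hasDerivAt_id' x).sub_const (ε/2*l*y^2)).fun_neg.mul_const (Dfun ε ξ z l)).fun_add
    ((((hasDerivAt_id' x).add_const (6*ξ*z l)).const_mul (3/2)).fun_mul
      (hasDerivAt_Bfun_x ε ξ wm z x y l)))
  exact h.congr_deriv (by ring)

theorem hasDerivAt_f1_y (x y l : ℝ) :
    HasDerivAt (fun t => f1 ε ξ wm z x t l)
      (ε*l*y*Dfun ε ξ z l + 3/2*(x + 6*ξ*z l) * (-2*(2*ξ*l*(z l) + 1 + wm)*y)) y := by
  have h := (((((hasDerivAt_id' y).fun_pow 2).const_mul (ε/2*l)).const_sub x).fun_neg.mul_const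
    (Dfun ε ξ z l)).fun_add ((hasDerivAt_Bfun_y ε ξ wm z x y l).const_mul (3/2*(x + 6*ξ*z l)))
  exact h.congr_deriv (by ring)

theorem hasDerivAt_f2_y (x y l : ℝ) :
    HasDerivAt (fun t => f2 ε ξ wm z x t l)
      ((2 - 1/2*l*x)*Dfun ε ξ z l
        + 3/2*(Bfun ε ξ wm z x y l + y * (-2*(2*ξ*l*(z l) + 1 + wm)*y))) y := by
  have h := (((hasDerivAt_id' y).mul_const (2 - 1/2*l*x)).mul_const (Dfun ε ξ z l)).fun_add
    (((hasDerivAt_id' y).const_mul (3/2)).fun_mul (hasDerivAt_Bfun_y ε ξ wm z x y l))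
  exact h.congr_deriv (by ring)

theorem hasDerivAt_f3_x (x y l : ℝ) :
    HasDerivAt (fun t => f3 ε ξ z t y l) (Dfun ε ξ z l / deriv z l) x :=
  (((hasDerivAt_id' x).mul_const (Dfun ε ξ z l)).div_const (deriv z l)).congr_deriv
    (by rw [one_mul])

theorem hasDerivAt_f3_lambda {x y l : ℝ} (hz : DifferentiableAt ℝ z l)
    (hz' : DifferentiableAt ℝ (deriv z) l) (hz'0 : deriv z l ≠ 0) :
    HasDerivAt (fun t => f3 ε ξ z x y t)
      ((x * -(12*ε*ξ*(1-6*ξ) * z l * deriv z l) * deriv z l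
        - x * Dfun ε ξ z l * deriv (deriv z) l) / deriv z l ^ 2) l :=
  ((hasDerivAt_Dfun ε ξ z hz).const_mul x).div hz'.hasDerivAt hz'0

end FastRollJacobian

theorem Matrix.charpoly_fin_three_of_eq_zero {R : Type*} [CommRing R]
    (M : Matrix (Fin 3) (Fin 3) R) (h00 : M 0 0 = 0) (h01 : M 0 1 = 0) (h20 : M 2 0 = 0)
    (h21 : M 2 1 = 0) :
    M.charpoly = X * (X - C (M 1 1)) * (X - C (M 2 2)) := by
  rw [Matrix.charpoly, Matrix.det_fin_three]
  simp [h00, h01, h20, h21]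

theorem roots_X_mul_X_sub_C_mul_X_add_C {R : Type*} [CommRing R] [IsDomain R] (a : R) :
    (X * (X - C a) * (X + C a)).roots = {0, a, -a} := by
  have h : (X + C a : R[X]) = X - C (-a) := by rw [map_neg, sub_neg_eq_add]
  rw [h, roots_mul, roots_mul, roots_X, roots_X_sub_C, roots_X_sub_C]
  · rfl
  · exact mul_ne_zero X_ne_zero (X_sub_C_ne_zero a)
  · exact mul_ne_zero (mul_ne_zero X_ne_zero (X_sub_C_ne_zero a)) (X_sub_C_ne_zero _)

section FastRollPoint

variable {ε ξ wm : ℝ} {z : ℝ → ℝ} {l : ℝ}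

theorem Dfun_eq_zero_of_mul_sq_eq_one (hK : 6*ε*ξ*(1-6*ξ)*(z l)^2 = 1) : Dfun ε ξ z l = 0 := by
  rw [Dfun, hK, sub_self]

theorem Bfun_fastRoll_eq_zero {y : ℝ} (hK : 6*ε*ξ*(1-6*ξ)*(z l)^2 = 1)
    (hy : y^2*(2*ξ*l*z l + 1 + wm) = 4*ξ) : Bfun ε ξ wm z (-(6*ξ*z l)) y l = 0 := by
  rw [Bfun]
  linear_combination (6*ξ*(1-wm) + (1-3*wm)*(1-6*ξ)/3)*hK - hy

end FastRollPoint

theorem fastRoll_point_charpoly_general (ε ξ wm : ℝ) (z : ℝ → ℝ) (lstar : ℝ)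
    (hsign : 0 < ε*ξ*(1-6*ξ))
    (hz2 : DifferentiableAt ℝ (deriv z) lstar) (hz' : deriv z lstar ≠ 0)
    (hl : (z lstar)^2 = 1/(6*ε*ξ*(1-6*ξ)))
    (hden : 2*ξ*lstar*(z lstar) + 1 + wm ≠ 0)
    (hpos : 0 < 4*ξ/(2*ξ*lstar*(z lstar) + 1 + wm)) :
    (Jmat ε ξ wm z (-(6*ξ*(z lstar)))
        (Real.sqrt (4*ξ/(2*ξ*lstar*(z lstar) + 1 + wm))) lstar).charpoly
      = X * (X - C (12*ξ)) * (X + C (12*ξ)) ∧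
    (Jmat ε ξ wm z (-(6*ξ*(z lstar)))
        (Real.sqrt (4*ξ/(2*ξ*lstar*(z lstar) + 1 + wm))) lstar).charpoly
      = X^3 - C (144*ξ^2) * X ∧
    (Jmat ε ξ wm z (-(6*ξ*(z lstar)))
        (Real.sqrt (4*ξ/(2*ξ*lstar*(z lstar) + 1 + wm))) lstar).charpoly.roots
      = {0, 12*ξ, -12*ξ} := by
  set x0 := -(6*ξ*(z lstar))
  set y0 := Real.sqrt (4*ξ/(2*ξ*lstar*(z lstar) + 1 + wm))
  have hK : 6*ε*ξ*(1-6*ξ)*(z lstar)^2 = 1 := by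
    rw [hl]; exact mul_one_div_cancel (by nlinarith)
  have hD := Dfun_eq_zero_of_mul_sq_eq_one hK
  have hy : y0^2*(2*ξ*lstar*z lstar + 1 + wm) = 4*ξ := by
    rw [Real.sq_sqrt hpos.le]; exact div_mul_cancel₀ _ hden
  have hB := Bfun_fastRoll_eq_zero (wm := wm) hK hy
  have hJ := (Jmat ε ξ wm z x0 y0 lstar).charpoly_fin_three_of_eq_zero
    ((hasDerivAt_f1_x ε ξ wm z x0 y0 lstar).deriv.trans (by simp [x0, hD, hB]))
    ((hasDerivAt_f1_y ε ξ wm z x0 y0 lstar).deriv.trans (by simp [x0, hD]))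
    ((hasDerivAt_f3_x ε ξ z x0 y0 lstar).deriv.trans (by simp [hD]))
    (deriv_const _ _)
  have h11 : Jmat ε ξ wm z x0 y0 lstar 1 1 = -(12*ξ) :=
    (hasDerivAt_f2_y ε ξ wm z x0 y0 lstar).deriv.trans (by rw [hD, hB]; linear_combination -3*hy)
  have h22 : Jmat ε ξ wm z x0 y0 lstar 2 2 = 12*ξ :=
    (hasDerivAt_f3_lambda ε ξ z (differentiableAt_of_deriv_ne_zero hz') hz2 hz').deriv.trans
      (by
        rw [hD, mul_zero, zero_mul, sub_zero, div_eq_iff (pow_ne_zero 2 hz')]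
        linear_combination 12*ξ*deriv z lstar^2*hK)
  have hchar : (Jmat ε ξ wm z x0 y0 lstar).charpoly = X * (X - C (12*ξ)) * (X + C (12*ξ)) := by
    rw [hJ, h11, h22, map_neg, sub_neg_eq_add]; ring
  refine ⟨hchar, ?_, by rw [hchar, roots_X_mul_X_sub_C_mul_X_add_C, neg_mul]⟩
  rw [hchar, show 144*ξ^2 = (12*ξ)^2 by ring, map_pow]; ring

/-- At the fast-roll inflation point
`P₂ₐ = (−6ξz(λ*), y*, λ*)`, `y* = √(4ξ/(2ξλ*z(λ*)+1+w_m))`, the Jacobian has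
characteristic polynomial `X(X − 12ξ)(X + 12ξ) = X³ − 144ξ²X`, hence eigenvalues
`0, 12ξ, −12ξ`: the point is non-hyperbolic. -/
theorem fastRoll_point_charpoly (ε ξ wm : ℝ) (z : ℝ → ℝ) (lstar : ℝ)
    (hε : ε = 1 ∨ ε = -1) (hξ0 : ξ ≠ 0) (hξ6 : ξ ≠ 1/6)
    (hsign : 0 < ε*ξ*(1-6*ξ))
    (hz1 : ∀ᶠ t in nhds lstar, DifferentiableAt ℝ z t)
    (hz2 : DifferentiableAt ℝ (deriv z) lstar) (hz' : deriv z lstar ≠ 0)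
    (hl : (z lstar)^2 = 1/(6*ε*ξ*(1-6*ξ)))
    (hden : 2*ξ*lstar*(z lstar) + 1 + wm ≠ 0)
    (hpos : 0 < 4*ξ/(2*ξ*lstar*(z lstar) + 1 + wm)) :
    (Jmat ε ξ wm z (-(6*ξ*(z lstar)))
        (Real.sqrt (4*ξ/(2*ξ*lstar*(z lstar) + 1 + wm))) lstar).charpoly
      = X * (X - C (12*ξ)) * (X + C (12*ξ)) ∧
    (Jmat ε ξ wm z (-(6*ξ*(z lstar)))
        (Real.sqrt (4*ξ/(2*ξ*lstar*(z lstar) + 1 + wm))) lstar).charpoly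
      = X^3 - C (144*ξ^2) * X ∧
    (Jmat ε ξ wm z (-(6*ξ*(z lstar)))
        (Real.sqrt (4*ξ/(2*ξ*lstar*(z lstar) + 1 + wm))) lstar).charpoly.roots
      = {0, 12*ξ, -12*ξ} :=
  fastRoll_point_charpoly_general ε ξ wm z lstar hsign hz2 hz' hl hden hpos
end

section
/- Assume ε ∈ {1,−1}, z is twice differentiable at λ₄* with z′(λ₄*) ≠ 0, and z(λ₄*) = 0. Let J be the 3×3 Jacobian matrix of the vector field F at the point P₄ = (0, 0, λ₄*). Then the characteristic polynomial of J equals (X − (3/2)(1+w_m))·(X² + (3/2)(1−w_m)X + 3ξ(1−3w_m)); in particular the eigenvalues of J are (3/2)(1+w_m) and −(3/4)·((1−w_m) ± √((1−w_m)² − (16/3)ξ(1−3w_m))), and w_eff(0,0,λ₄*) = w_m. -/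
open Polynomial Filter

lemma deriv_cubic (a b c d x : ℝ) :
    deriv (fun t : ℝ => a + b*t + c*t^2 + d*t^3) x = b + 2*c*x + 3*d*x^2 := by
  have h : HasDerivAt (fun t : ℝ => a + b*t + c*t^2 + d*t^3)
      (0 + b*1 + c*((2:ℕ)*x^(2-1)) + d*((3:ℕ)*x^(3-1))) x :=
    (((hasDerivAt_const x a).add (HasDerivAt.const_mul b (hasDerivAt_id x))).add
      (HasDerivAt.const_mul c (hasDerivAt_pow 2 x))).add
      (HasDerivAt.const_mul d (hasDerivAt_pow 3 x))
  rw [h.deriv]; push_cast; ring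

/-- At the matter-dominated point `P₄ = (0, 0, λ₄*)` with
`z(λ₄*) = 0`, the Jacobian has characteristic polynomial
`(X − (3/2)(1+w_m))(X² + (3/2)(1−w_m)X + 3ξ(1−3w_m))`; in particular the eigenvalues
are `(3/2)(1+w_m)` and `−(3/4)((1−w_m) ± √((1−w_m)² − (16/3)ξ(1−3w_m)))`, and
`w_eff = w_m` there. -/
theorem matter_point_charpoly (ε ξ wm : ℝ) (z : ℝ → ℝ) (lstar : ℝ)
    (hε : ε = 1 ∨ ε = -1)
    (hz1 : ∀ᶠ t in nhds lstar, DifferentiableAt ℝ z t)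
    (hz2 : DifferentiableAt ℝ (deriv z) lstar) (hz' : deriv z lstar ≠ 0)
    (hl : z lstar = 0) :
    (Jmat ε ξ wm z 0 0 lstar).charpoly
      = (X - C (3/2*(1+wm))) * (X^2 + C (3/2*(1-wm)) * X + C (3*ξ*(1-3*wm))) ∧
    (Jmat ε ξ wm z 0 0 lstar).charpoly.IsRoot (3/2*(1+wm)) ∧
    (0 ≤ (1-wm)^2 - 16/3*ξ*(1-3*wm) →
      (Jmat ε ξ wm z 0 0 lstar).charpoly.IsRoot
        (-(3/4)*((1-wm) + Real.sqrt ((1-wm)^2 - 16/3*ξ*(1-3*wm)))) ∧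
      (Jmat ε ξ wm z 0 0 lstar).charpoly.IsRoot
        (-(3/4)*((1-wm) - Real.sqrt ((1-wm)^2 - 16/3*ξ*(1-3*wm))))) ∧
    weff ε ξ wm z 0 0 lstar = wm := by
  set d := deriv z lstar with hd
  have hz : HasDerivAt z d lstar := (hz1.self_of_nhds).hasDerivAt
  -- entry (0,0)
  have h00 : deriv (fun t => f1 ε ξ wm z t 0 lstar) 0 = -(3/2*(1-wm)) := by
    have hfun : (fun t : ℝ => f1 ε ξ wm z t 0 lstar)
        = fun t : ℝ => 0 + (-(3/2*(1-wm)))*t + 0*t^2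
            + (3/2*(ε*(1-6*ξ)*(1-wm)+2*ε*ξ*(1-3*wm)))*t^3 := by
      funext t; simp only [f1, Dfun, Bfun, hl]; ring
    rw [hfun, deriv_cubic]; ring
  -- entry (0,1)
  have h01 : deriv (fun t => f1 ε ξ wm z 0 t lstar) 0 = 0 := by
    have hfun : (fun t : ℝ => f1 ε ξ wm z 0 t lstar)
        = fun t : ℝ => 0 + 0*t + (ε/2*lstar)*t^2 + 0*t^3 := by
      funext t; simp only [f1, Dfun, Bfun, hl]; ring
    rw [hfun, deriv_cubic]; ring
  -- entry (0,2)
  have h02 : deriv (fun t => f1 ε ξ wm z 0 0 t) lstar = -(3*ξ*(1-3*wm))*d := by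
    have hfun : (fun t : ℝ => f1 ε ξ wm z 0 0 t)
        = fun t : ℝ => (9*ξ) * ((z t) * ((wm - 1/3) + (2*ε*ξ*(1-3*wm)) * (z t)^2)) := by
      funext t; simp only [f1, Dfun, Bfun]; ring
    have h1 : HasDerivAt (fun t => (z t) * ((wm - 1/3) + (2*ε*ξ*(1-3*wm)) * (z t)^2))
        (d * ((wm - 1/3) + (2*ε*ξ*(1-3*wm)) * (z lstar)^2)
          + z lstar * (0 + (2*ε*ξ*(1-3*wm)) * ((2:ℕ) * z lstar ^ (2-1) * d))) lstar :=
      hz.mul ((hasDerivAt_const lstar (wm - 1/3)).add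
        (HasDerivAt.const_mul (2*ε*ξ*(1-3*wm)) (hz.pow 2)))
    rw [hfun, (h1.const_mul (9*ξ)).deriv, hl]; ring
  -- entry (1,0)
  have h10 : deriv (fun t => f2 ε ξ wm z t 0 lstar) 0 = 0 := by
    have hfun : (fun t : ℝ => f2 ε ξ wm z t 0 lstar) = fun _ : ℝ => (0:ℝ) := by
      funext t; simp [f2]
    rw [hfun, deriv_const]
  -- entry (1,1)
  have h11 : deriv (fun t => f2 ε ξ wm z 0 t lstar) 0 = 3/2*(1+wm) := by
    have hfun : (fun t : ℝ => f2 ε ξ wm z 0 t lstar)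
        = fun t : ℝ => 0 + (3/2*(1+wm))*t + 0*t^2 + (-(3/2)*(1+wm))*t^3 := by
      funext t; simp only [f2, Dfun, Bfun, hl]; ring
    rw [hfun, deriv_cubic]; ring
  -- entry (1,2)
  have h12 : deriv (fun t => f2 ε ξ wm z 0 0 t) lstar = 0 := by
    have hfun : (fun t : ℝ => f2 ε ξ wm z 0 0 t) = fun _ : ℝ => (0:ℝ) := by
      funext t; simp [f2]
    rw [hfun, deriv_const]
  -- entry (2,0)
  have h20 : deriv (fun t => f3 ε ξ z t 0 lstar) 0 = d⁻¹ := by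
    have hfun : (fun t : ℝ => f3 ε ξ z t 0 lstar)
        = fun t : ℝ => 0 + (Dfun ε ξ z lstar / d)*t + 0*t^2 + 0*t^3 := by
      funext t; simp only [f3]; ring
    rw [hfun, deriv_cubic]
    simp only [Dfun, hl]
    norm_num
  -- entry (2,1)
  have h21 : deriv (fun t => f3 ε ξ z 0 t lstar) 0 = 0 := by
    have hfun : (fun t : ℝ => f3 ε ξ z 0 t lstar) = fun _ : ℝ => (0:ℝ) := by
      funext t; simp [f3]
    rw [hfun, deriv_const]
  -- entry (2,2)
  have h22 : deriv (fun t => f3 ε ξ z 0 0 t) lstar = 0 := by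
    have hfun : (fun t : ℝ => f3 ε ξ z 0 0 t) = fun _ : ℝ => (0:ℝ) := by
      funext t; simp [f3]
    rw [hfun, deriv_const]
  have hJ : Jmat ε ξ wm z 0 0 lstar = Matrix.of
      ![![-(3/2*(1-wm)), 0, -(3*ξ*(1-3*wm))*d],
        ![0, 3/2*(1+wm), 0],
        ![d⁻¹, 0, 0]] := by
    unfold Jmat
    ext i j
    fin_cases i <;> fin_cases j <;>
      simp only [Matrix.of_apply, Matrix.cons_val', Matrix.cons_val_zero,
        Matrix.cons_val_one, Matrix.head_cons, Matrix.empty_val',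
        Matrix.cons_val_fin_one, Matrix.head_fin_const, Matrix.cons_val_two,
        Matrix.tail_cons] <;>
      first
        | exact h00 | exact h01 | exact h02 | exact h10 | exact h11
        | exact h12 | exact h20 | exact h21 | exact h22
  have hC : C (-(3*ξ*(1-3*wm))*d) * C (d⁻¹) = -C (3*ξ*(1-3*wm)) := by
    rw [← map_neg, ← C_mul]
    congr 1
    field_simp
  have hcp : (Jmat ε ξ wm z 0 0 lstar).charpoly
      = (X - C (3/2*(1+wm))) * (X^2 + C (3/2*(1-wm)) * X + C (3*ξ*(1-3*wm))) := by
    rw [hJ, Matrix.charpoly, Matrix.det_fin_three]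
    simp only [Matrix.charmatrix_apply_eq, Matrix.charmatrix_apply_ne,
      Matrix.of_apply, Matrix.cons_val', Matrix.cons_val_zero, Matrix.cons_val_one,
      Matrix.head_cons, Matrix.empty_val', Matrix.cons_val_fin_one,
      Matrix.head_fin_const, Matrix.cons_val_two, Matrix.tail_cons, ne_eq,
      Fin.reduceEq, not_false_eq_true, map_neg, map_zero]
    linear_combination (-(X - C (3/2*(1+wm)))) * hC
  refine ⟨hcp, ?_, ?_, ?_⟩
  · rw [hcp]
    simp [IsRoot]
  · intro hpos
    have hs : Real.sqrt ((1-wm)^2 - 16/3*ξ*(1-3*wm)) ^ 2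
        = (1-wm)^2 - 16/3*ξ*(1-3*wm) := Real.sq_sqrt hpos
    constructor <;>
      · rw [hcp]
        simp only [IsRoot, eval_mul, eval_add, eval_sub, eval_pow, eval_X, eval_C]
        apply mul_eq_zero_of_right
        linear_combination (9/16 : ℝ) * hs
  · simp [weff, Dfun, hl]
end
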